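/- arXiv:1511.07021 — 3 statements merged into one kernel-verified Lean document; each statement's English description precedes it below -/
import Mathlib

section
/- Let X be a compact Hausdorff topological space and let P be a closed subgroup of H(X), the group of all homeomorphisms of X with the compact-open topology τ_co. Then τ_co restricted to P is minimal within the class of π-uniform topologies on P; that is, every Hausdorff group topology σ on P which is coarser than τ_co and for which the natural evaluation action (P, σ) × X → X is π-uniform (with respect to the unique compatible uniformity on X) coincides with τ_co. -/
open scoped Topology

/-- The group of self-homeomorphisms of `X`, with composition as multiplication:
`(f * g) x = f (g x)`, identity `Homeomorph.refl` and inverse `Homeomorph.symm`. -/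
instance homeoGroup (X : Type*) [TopologicalSpace X] : Group (X ≃ₜ X) where
  mul f g := g.trans f
  one := Homeomorph.refl X
  inv := Homeomorph.symm
  mul_assoc f g h := rfl
  one_mul f := rfl
  mul_one f := rfl
  inv_mul_cancel f := by ext x; exact f.symm_apply_apply x

/-- The compact-open topology on the homeomorphism group `H(X)`, induced from the
compact-open topology on `C(X, X)`. -/
def coTop (X : Type*) [TopologicalSpace X] : TopologicalSpace (X ≃ₜ X) :=
  TopologicalSpace.induced (fun f : X ≃ₜ X => (f : C(X, X))) ContinuousMap.compactOpen

/-- The unique uniformity compatible with the topology of a compact Hausdorff space. -/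
def cptUnif (X : Type*) [TopologicalSpace X] [CompactSpace X] [T2Space X] :
    Filter (X × X) :=
  @uniformity X uniformSpaceOfCompactR1

/-- An action `act` of a group `G` equipped with a topology `σ` on a set `X` equipped with a
uniformity (filter) `𝔅` is *π-uniform* if for every `g₀ ∈ G` and every entourage `ε ∈ 𝔅`
there exist an entourage `δ ∈ 𝔅` and a neighborhood `U` of `g₀` such that
`(g • x, g • y) ∈ ε` whenever `(x, y) ∈ δ` and `g ∈ U`. -/
def IsPiUniform {G X : Type*} (σ : TopologicalSpace G) (𝔅 : Filter (X × X))
    (act : G → X → X) : Prop :=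
  ∀ g₀ : G, ∀ ε ∈ 𝔅, ∃ δ ∈ 𝔅, ∃ U ∈ @nhds G σ g₀,
    ∀ g ∈ U, ∀ x y : X, (x, y) ∈ δ → (act g x, act g y) ∈ ε

/-!
Let an ultrafilter `F` on `P` converge to `g₀` in `σ`. By compactness of `X → X`, the maps `g`
and `g⁻¹` converge pointwise along `F`; π-uniformity makes the family eventually uniformly
equicontinuous, so on the compact space `X` both convergences are uniform. The two uniform limits
are continuous and mutually inverse, hence form a homeomorphism `Φ` to which `F` converges in the
compact-open topology. Since `P` is closed, `Φ ∈ P`; as `σ` is coarser, `F` also converges to `Φ`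
in `σ`, and the Hausdorff property forces `Φ = g₀`.
-/

open Filter Set Uniformity Function

section UniformLimits

variable {ι X α : Type*} [UniformSpace X] [UniformSpace α]

theorem TendstoUniformly.of_tendsto_of_eventually_equicontinuous [CompactSpace X]
    {F : ι → X → α} {f : X → α} {l : Filter ι}
    (hF : ∀ ε ∈ 𝓤 α, ∃ δ ∈ 𝓤 X, ∀ᶠ i in l, ∀ x y, (x, y) ∈ δ → (F i x, F i y) ∈ ε)
    (hf : Tendsto F l (𝓝 f)) : TendstoUniformly F f l := by
  rcases l.eq_or_neBot with rfl | _
  · exact fun _ _ => eventually_bot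
  intro ε hε
  obtain ⟨t, ht, htε⟩ := comp3_mem_uniformity hε
  obtain ⟨c, ⟨hc, hc_closed⟩, hct⟩ := uniformity_hasBasis_closed.mem_iff.mp ht
  obtain ⟨δ, hδ, hFδ⟩ := hF c hc
  have hpt : ∀ x, Tendsto (F · x) l (𝓝 (f x)) := tendsto_pi_nhds.mp hf
  -- `c` is closed, so the modulus passes to the pointwise limit `f`
  have hfδ : ∀ x y, (x, y) ∈ δ → (f x, f y) ∈ c := fun x y hxy =>
    hc_closed.mem_of_tendsto ((hpt x).prodMk_nhds (hpt y)) (hFδ.mono fun i hi => hi x y hxy)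
  obtain ⟨A, hA⟩ := CompactSpace.elim_nhds_subcover (fun a => {x | (x, a) ∈ δ ∧ (a, x) ∈ δ})
    fun a => inter_mem (mem_nhds_right a hδ) (mem_nhds_left a hδ)
  have hA_close : ∀ᶠ i in l, ∀ a ∈ A, (f a, F i a) ∈ t :=
    (eventually_all_finset A).2 fun a _ => hpt a (mem_nhds_left (f a) ht)
  filter_upwards [hFδ, hA_close] with i hiδ hiA x
  obtain ⟨a, ha, hxa, hax⟩ := mem_iUnion₂.mp (hA.symm.subset (mem_univ x))
  exact htε <| SetRel.prodMk_mem_comp (hct (hfδ x a hxa)) <|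
    SetRel.prodMk_mem_comp (hiA a ha) (hct (hiδ a x hax))

theorem Function.LeftInverse.of_tendstoUniformly {β : Type*} [TopologicalSpace β] [T2Space α]
    {l : Filter ι} [NeBot l] {F : ι → β → α} {G : ι → α → β} {f : β → α} {g : α → β}
    (hF : TendstoUniformly F f l) (hf : Continuous f)
    (hG : ∀ x, Tendsto (G · x) l (𝓝 (g x))) (hFG : ∀ i, LeftInverse (F i) (G i)) :
    LeftInverse f g := fun x =>
  tendsto_nhds_unique (hF.tendsto_comp hf.continuousAt (hG x))
    (tendsto_const_nhds.congr fun i => (hFG i x).symm)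

theorem Homeomorph.exists_coe_eq_of_tendstoUniformly [T2Space X] {l : Filter ι} [NeBot l]
    {e : ι → X ≃ₜ X} {f g : X → X} (hf : TendstoUniformly (fun i => ⇑(e i)) f l)
    (hg : TendstoUniformly (fun i => ⇑(e i).symm) g l) : ∃ Φ : X ≃ₜ X, ⇑Φ = f := by
  have hf_cont := hf.continuous (Frequently.of_forall fun i => (e i).continuous)
  have hg_cont := hg.continuous (Frequently.of_forall fun i => (e i).symm.continuous)
  have hgf : LeftInverse g f :=
    .of_tendstoUniformly hg hg_cont hf.tendsto_at fun i => (e i).symm_apply_apply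
  have hfg : LeftInverse f g :=
    .of_tendstoUniformly hf hf_cont hg.tendsto_at fun i => (e i).apply_symm_apply
  exact ⟨⟨⟨f, g, hgf, hfg⟩, hf_cont, hg_cont⟩, rfl⟩

theorem tendsto_coTop_iff_tendstoUniformly [CompactSpace X] {l : Filter ι} {e : ι → X ≃ₜ X}
    {Φ : X ≃ₜ X} :
    Tendsto e l (@nhds _ (coTop X) Φ) ↔ TendstoUniformly (fun i => ⇑(e i)) Φ l := by
  rw [coTop, nhds_induced, tendsto_comap_iff, ContinuousMap.tendsto_iff_tendstoUniformly]
  rfl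

end UniformLimits

section PiUniform

variable {X G : Type*} [UniformSpace X] [CompactSpace X]

theorem IsPiUniform.tendstoUniformly {ι : Type*} {σ : TopologicalSpace G} {act : G → X → X}
    (hπ : IsPiUniform σ (𝓤 X) act) {l : Filter ι} {φ : ι → G} {g₀ : G}
    (hφ : Tendsto φ l (@nhds G σ g₀)) {f : X → X} (hf : Tendsto (fun i => act (φ i)) l (𝓝 f)) :
    TendstoUniformly (fun i => act (φ i)) f l := by
  refine .of_tendsto_of_eventually_equicontinuous (fun ε hε => ?_) hf
  obtain ⟨δ, hδ, U, hU, hUδ⟩ := hπ g₀ ε hε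
  exact ⟨δ, hδ, mem_of_superset (hφ hU) fun i hi => hUδ (φ i) hi⟩

theorem IsPiUniform.exists_tendsto_coTop [T2Space X] {P : Subgroup (X ≃ₜ X)}
    {σ : TopologicalSpace P} (hinv : @ContinuousInv P σ _)
    (hπ : IsPiUniform σ (𝓤 X) fun (p : P) (x : X) => (p : X ≃ₜ X) x)
    {F : Ultrafilter P} {g₀ : P} (hF : ↑F ≤ @nhds P σ g₀) :
    ∃ Φ : X ≃ₜ X, Tendsto Subtype.val (F : Filter P) (@nhds _ (coTop X) Φ) := by
  have hF_inv : Tendsto (·⁻¹) (F : Filter P) (@nhds P σ g₀⁻¹) :=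
    ((@continuous_inv P σ _ hinv).tendsto g₀).mono_left hF
  have hf := hπ.tendstoUniformly (φ := id) hF
    (F.map fun p x => (p : X ≃ₜ X) x).le_nhds_lim
  have hg := hπ.tendstoUniformly hF_inv
    (F.map fun p x => ((p⁻¹ : P) : X ≃ₜ X) x).le_nhds_lim
  obtain ⟨Φ, hΦ⟩ := Homeomorph.exists_coe_eq_of_tendstoUniformly (e := Subtype.val) hf hg
  exact ⟨Φ, tendsto_coTop_iff_tendstoUniformly.2 (hΦ ▸ hf)⟩

end PiUniform

/-- Let `X` be a compact Hausdorff space and let `P` be a closed subgroup of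
the homeomorphism group `H(X)` with the compact-open topology.  Then the compact-open
topology on `P` is minimal within the class of π-uniform topologies on `P`: every coarser
Hausdorff group topology `σ` on `P` for which the evaluation action of `(P, σ)` on `X` is
π-uniform (with respect to the unique compatible uniformity on `X`) coincides with the
compact-open topology. -/
theorem compactOpen_minimal_piUniform_homeos {X : Type*}
    [TopologicalSpace X] [CompactSpace X] [T2Space X]
    (P : Subgroup (X ≃ₜ X))
    (hPclosed : IsClosed[coTop X] (P : Set (X ≃ₜ X)))
    (σ : TopologicalSpace ↥P)
    (hσgrp : @IsTopologicalGroup ↥P σ _) (hσT2 : @T2Space ↥P σ)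
    (hcoarse : TopologicalSpace.induced (Subtype.val : ↥P → X ≃ₜ X) (coTop X) ≤ σ)
    (hπ : IsPiUniform σ (cptUnif X) (fun (p : ↥P) (x : X) => (p : X ≃ₜ X) x)) :
    σ = TopologicalSpace.induced (Subtype.val : ↥P → X ≃ₜ X) (coTop X) := by
  let _ : UniformSpace X := uniformSpaceOfCompactR1
  let _ : TopologicalSpace (X ≃ₜ X) := coTop X
  refine le_antisymm ((le_iff_nhds _ _).2 fun g₀ => le_iff_ultrafilter.2 fun F hF => ?_) hcoarse
  obtain ⟨Φ, hΦ⟩ := IsPiUniform.exists_tendsto_coTop hσgrp.toContinuousInv hπ hF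
  have hΦP : Φ ∈ P := hPclosed.mem_of_tendsto hΦ (Eventually.of_forall fun p => p.2)
  have hFΦ : ↑F ≤ @nhds P (.induced Subtype.val (coTop X)) ⟨Φ, hΦP⟩ := by
    rw [nhds_induced]
    exact hΦ.le_comap
  have hΦg₀ : (⟨Φ, hΦP⟩ : P) = g₀ :=
    @tendsto_nhds_unique _ _ σ hσT2 _ _ _ _ _ (hFΦ.trans ((le_iff_nhds _ _).1 hcoarse _)) hF
  exact hΦg₀ ▸ hFΦ
end

section
/- Let (K, ≤) be a compact partially ordered topological space equipped with a binary operation ω : K × K → K, let Aut₊(K) denote the group of all order-preserving homeomorphisms f of K satisfying f(ω(x, y)) = ω(f(x), f(y)) for all x, y ∈ K, and let P be a closed subgroup of Aut₊(K). Then the compact-open topology τ_co restricted to P is minimal within the class of π-uniform topologies on P; that is, every Hausdorff group topology σ on P which is coarser than τ_co and for which the natural evaluation action (P, σ) × K → K is π-uniform coincides with τ_co. -/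
open scoped Topology

/-- The group `Aut₊(K)` of all order-preserving homeomorphisms of `K` that are automorphisms
of the binary operation `ω`, as a subgroup of the homeomorphism group of `K`. -/
def AutPlus (K : Type*) [TopologicalSpace K] [PartialOrder K] (ω : K → K → K) :
    Subgroup (K ≃ₜ K) where
  carrier := {f : K ≃ₜ K |
    (∀ x y : K, x ≤ y ↔ f x ≤ f y) ∧ ∀ x y : K, f (ω x y) = ω (f x) (f y)}
  one_mem' := ⟨fun _ _ => Iff.rfl, fun _ _ => rfl⟩
  mul_mem' := by
    rintro a b ⟨ha1, ha2⟩ ⟨hb1, hb2⟩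
    constructor
    · intro x y
      exact (hb1 x y).trans (ha1 (b x) (b y))
    · intro x y
      show a (b (ω x y)) = ω (a (b x)) (a (b y))
      rw [hb2, ha2]
  inv_mem' := by
    rintro a ⟨ha1, ha2⟩
    constructor
    · intro x y
      have := ha1 (a.symm x) (a.symm y)
      simpa using this.symm
    · intro x y
      show a.symm (ω x y) = ω (a.symm x) (a.symm y)
      apply a.injective
      rw [ha2]
      simp

/-!
Along an ultrafilter `𝒰` on `P` converging to `g₀` in `σ`, π-uniformity at `g₀` and at `g₀⁻¹` makes
the homeomorphisms and their inverses eventually uniformly equicontinuous.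
By compactness of `K` both converge pointwise; equicontinuity upgrades this to uniform
convergence, i.e. convergence in the compact-open topology, to mutually inverse continuous
maps. The limit homeomorphism lies in `P` because `P` is closed, and it is `g₀` because `σ` is
Hausdorff and coarser than the compact-open topology. Hence `𝒰` converges to `g₀` in the
compact-open topology.
-/

open Filter Uniformity

section EventuallyUniformEquicontinuous

variable {ι κ α β : Type*} [UniformSpace α] [UniformSpace β]

/-- Each entourage `U` of `β` has an entourage `V` of `α` such that, eventually along `l`, `F i`
maps `V`-close points to `U`-close points. -/
def EventuallyUniformEquicontinuous (F : ι → α → β) (l : Filter ι) : Prop :=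
  Tendsto (fun q : ι × α × α => (F q.1 q.2.1, F q.1 q.2.2)) (l ×ˢ 𝓤 α) (𝓤 β)

variable {F : ι → α → β} {l : Filter ι} {f : α → β}

theorem EventuallyUniformEquicontinuous.comp_tendsto {l' : Filter κ} {φ : κ → ι}
    (hF : EventuallyUniformEquicontinuous F l) (hφ : Tendsto φ l' l) :
    EventuallyUniformEquicontinuous (fun k => F (φ k)) l' :=
  hF.comp (hφ.prodMap tendsto_id)

theorem EventuallyUniformEquicontinuous.uniformContinuous_of_tendsto [l.NeBot]
    (hF : EventuallyUniformEquicontinuous F l) (hf : ∀ x, Tendsto (fun i => F i x) l (𝓝 (f x))) :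
    UniformContinuous f := by
  refine uniformity_hasBasis_closed.tendsto_right_iff.2 fun U ⟨hU, hUc⟩ => ?_
  obtain ⟨A, hA, V, hV, hAV⟩ := mem_prod_iff.1 (hF hU)
  filter_upwards [hV] with xy hxy
  exact hUc.mem_of_tendsto ((hf xy.1).prodMk_nhds (hf xy.2))
    (eventually_of_mem hA fun i hi => @hAV (i, xy) ⟨hi, hxy⟩)

theorem EventuallyUniformEquicontinuous.tendstoUniformly_of_tendsto [CompactSpace α] [l.NeBot]
    (hF : EventuallyUniformEquicontinuous F l) (hf : ∀ x, Tendsto (fun i => F i x) l (𝓝 (f x))) :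
    TendstoUniformly F f l := by
  rw [← tendstoLocallyUniformly_iff_tendstoUniformly_of_compactSpace,
    tendstoLocallyUniformly_iff_forall_tendsto]
  intro x
  have hfx : Tendsto (fun q : ι × α => (f q.2, f x)) (l ×ˢ 𝓝 x) (𝓤 β) :=
    Uniform.tendsto_nhds_left.1
      (((hF.uniformContinuous_of_tendsto hf).continuous.tendsto x).comp tendsto_snd)
  have hFx : Tendsto (fun q : ι × α => (f x, F q.1 x)) (l ×ˢ 𝓝 x) (𝓤 β) :=
    Uniform.tendsto_nhds_right.1 ((hf x).comp tendsto_fst)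
  have hnear : Tendsto (fun q : ι × α => (q.1, x, q.2)) (l ×ˢ 𝓝 x) (l ×ˢ 𝓤 α) :=
    tendsto_fst.prodMk (Uniform.tendsto_nhds_right.1 tendsto_snd)
  exact (hfx.uniformity_trans hFx).uniformity_trans (hF.comp hnear)

theorem EventuallyUniformEquicontinuous.leftInverse_of_tendsto [T2Space β] [l.NeBot]
    {G : ι → β → α} {g : β → α} (hF : EventuallyUniformEquicontinuous F l)
    (hFG : ∀ i, Function.LeftInverse (F i) (G i))
    (hf : ∀ x, Tendsto (fun i => F i x) l (𝓝 (f x)))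
    (hg : ∀ y, Tendsto (fun i => G i y) l (𝓝 (g y))) :
    Function.LeftInverse f g := by
  intro y
  have hnear : Tendsto (fun i => (i, g y, G i y)) l (l ×ˢ 𝓤 α) :=
    tendsto_id.prodMk (Uniform.tendsto_nhds_right.1 (hg y))
  have hy : Tendsto (fun i => F i (g y)) l (𝓝 y) :=
    Uniform.tendsto_nhds_left.2 (by simpa only [Function.comp_def, hFG _ _] using hF.comp hnear)
  exact tendsto_nhds_unique (hf (g y)) hy

end EventuallyUniformEquicontinuous

theorem IsPiUniform.eventuallyUniformEquicontinuous {G X : Type*} [UniformSpace X]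
    {σ : TopologicalSpace G} {act : G → X → X} (h : IsPiUniform σ (𝓤 X) act) (g₀ : G) :
    EventuallyUniformEquicontinuous act (@nhds G σ g₀) := fun ε hε =>
  let ⟨_, hδ, _, hU, hUδ⟩ := h g₀ ε hε
  mem_map.2 <| mem_of_superset (prod_mem_prod hU hδ) fun q hq => hUδ q.1 hq.1 q.2.1 q.2.2 hq.2

theorem Homeomorph.exists_tendsto_coTop_of_eventuallyUniformEquicontinuous {ι X : Type*}
    [UniformSpace X] [CompactSpace X] [T2Space X] {𝒰 : Ultrafilter ι} {φ : ι → X ≃ₜ X}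
    (hφ : EventuallyUniformEquicontinuous (fun i => ⇑(φ i)) 𝒰)
    (hφsymm : EventuallyUniformEquicontinuous (fun i => ⇑(φ i).symm) 𝒰) :
    ∃ h : X ≃ₜ X, Tendsto φ 𝒰 (@nhds _ (coTop X) h) := by
  obtain ⟨f, hf⟩ : ∃ f : X → X, Tendsto (fun i => ⇑(φ i)) 𝒰 (𝓝 f) :=
    ⟨_, (𝒰.map fun i => ⇑(φ i)).le_nhds_lim⟩
  obtain ⟨g, hg⟩ : ∃ g : X → X, Tendsto (fun i => ⇑(φ i).symm) 𝒰 (𝓝 g) :=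
    ⟨_, (𝒰.map fun i => ⇑(φ i).symm).le_nhds_lim⟩
  rw [tendsto_pi_nhds] at hf hg
  let h : X ≃ₜ X :=
    { toFun := f
      invFun := g
      left_inv := hφsymm.leftInverse_of_tendsto (fun i => (φ i).symm_apply_apply) hg hf
      right_inv := hφ.leftInverse_of_tendsto (fun i => (φ i).apply_symm_apply) hf hg
      continuous_toFun := (hφ.uniformContinuous_of_tendsto hf).continuous
      continuous_invFun := (hφsymm.uniformContinuous_of_tendsto hg).continuous }
  refine ⟨h, ?_⟩
  rw [coTop, nhds_induced, tendsto_comap_iff, ContinuousMap.tendsto_iff_tendstoUniformly]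
  exact hφ.tendstoUniformly_of_tendsto hf

theorem compactOpen_minimal_piUniform_orderedAut_general {K : Type*}
    [TopologicalSpace K] [CompactSpace K] [T2Space K]
    (P : Subgroup (K ≃ₜ K))
    (hPclosed : IsClosed[coTop K] (P : Set (K ≃ₜ K)))
    (σ : TopologicalSpace ↥P)
    (hσgrp : @IsTopologicalGroup ↥P σ _) (hσT2 : @T2Space ↥P σ)
    (hcoarse : TopologicalSpace.induced (Subtype.val : ↥P → K ≃ₜ K) (coTop K) ≤ σ)
    (hπ : IsPiUniform σ (cptUnif K) (fun (p : ↥P) (x : K) => (p : K ≃ₜ K) x)) :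
    σ = TopologicalSpace.induced (Subtype.val : ↥P → K ≃ₜ K) (coTop K) := by
  let _ : UniformSpace K := uniformSpaceOfCompactR1
  let _ : TopologicalSpace ↥P := σ
  let _ : TopologicalSpace (K ≃ₜ K) := coTop K
  refine le_antisymm ((le_iff_nhds _ _).2 fun g₀ => le_iff_ultrafilter.2 fun 𝒰 h𝒰 => ?_) hcoarse
  have hinv : Tendsto (·⁻¹) (𝒰 : Filter ↥P) (𝓝 g₀⁻¹) :=
    (continuous_inv.tendsto g₀).mono_left h𝒰
  obtain ⟨h, hh⟩ := Homeomorph.exists_tendsto_coTop_of_eventuallyUniformEquicontinuous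
    ((hπ.eventuallyUniformEquicontinuous g₀).comp_tendsto h𝒰)
    ((hπ.eventuallyUniformEquicontinuous g₀⁻¹).comp_tendsto hinv)
  have hhP : h ∈ P := hPclosed.mem_of_tendsto hh (.of_forall fun p => p.2)
  have hco : (𝒰 : Filter ↥P) ≤
      @nhds _ (TopologicalSpace.induced Subtype.val (coTop K)) ⟨h, hhP⟩ := by
    rw [nhds_induced]
    exact hh.le_comap
  obtain rfl : (⟨h, hhP⟩ : ↥P) = g₀ := tendsto_nhds_unique (hco.trans (nhds_mono hcoarse)) h𝒰
  exact hco

/-- Let `K` be a compact partially ordered topological space equipped with a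
binary operation `ω`, and let `P` be a closed subgroup of `Aut₊(K)`.  Then the compact-open
topology on `P` is minimal within the class of π-uniform topologies on `P`. -/
theorem compactOpen_minimal_piUniform_orderedAut {K : Type*}
    [TopologicalSpace K] [CompactSpace K] [T2Space K]
    [PartialOrder K] [OrderClosedTopology K] (ω : K → K → K)
    (P : Subgroup (K ≃ₜ K)) (hPle : P ≤ AutPlus K ω)
    (hPclosed : IsClosed[coTop K] (P : Set (K ≃ₜ K)))
    (σ : TopologicalSpace ↥P)
    (hσgrp : @IsTopologicalGroup ↥P σ _) (hσT2 : @T2Space ↥P σ)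
    (hcoarse : TopologicalSpace.induced (Subtype.val : ↥P → K ≃ₜ K) (coTop K) ≤ σ)
    (hπ : IsPiUniform σ (cptUnif K) (fun (p : ↥P) (x : K) => (p : K ≃ₜ K) x)) :
    σ = TopologicalSpace.induced (Subtype.val : ↥P → K ≃ₜ K) (coTop K) :=
  compactOpen_minimal_piUniform_orderedAut_general P hPclosed σ hσgrp hσT2 hcoarse hπ
end

section
/- Let G be a compact Hausdorff topological group and P ≤ Aut(G) a subgroup. If P ∩ Inn(G) is essential in cl(P) ∩ Inn(G) (where cl(P) is the closure of P in Aut(G)), then the topological semidirect product G ⋊ P is a minimal topological group. -/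
open scoped Topology

/-- The group `Aut(G)` of all topological group automorphisms of a topological group `G`
(group automorphisms that are homeomorphisms), as a subgroup of the homeomorphism
group of `G`. -/
def topAut (G : Type*) [Group G] [TopologicalSpace G] : Subgroup (G ≃ₜ G) where
  carrier := {f : G ≃ₜ G | ∀ a b : G, f (a * b) = f a * f b}
  one_mem' := fun _ _ => rfl
  mul_mem' := by
    intro f g hf hg a b
    show f (g (a * b)) = f (g a) * f (g b)
    rw [hg, hf]
  inv_mem' := by
    intro f hf a b
    show f.symm (a * b) = f.symm a * f.symm b
    apply f.injective
    rw [hf]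
    simp

/-- The compact-open topology on `Aut(G)`. -/
def autTop (G : Type*) [Group G] [TopologicalSpace G] : TopologicalSpace ↥(topAut G) :=
  TopologicalSpace.induced (Subtype.val : ↥(topAut G) → G ≃ₜ G) (coTop G)

/-- The tautological action of a subgroup `P ≤ Aut(G)` on `G`, as a homomorphism
`P →* MulAut G`. -/
def actHom {G : Type*} [Group G] [TopologicalSpace G] (P : Subgroup ↥(topAut G)) :
    ↥P →* MulAut G where
  toFun p := MulEquiv.mk' p.1.1.toEquiv (fun a b => p.1.2 a b)
  map_one' := rfl
  map_mul' _ _ := rfl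

/-- The topology on a subgroup `P ≤ Aut(G)`, inherited from the compact-open topology. -/
def subAutTop {G : Type*} [Group G] [TopologicalSpace G] (P : Subgroup ↥(topAut G)) :
    TopologicalSpace ↥P :=
  TopologicalSpace.induced (Subtype.val : ↥P → ↥(topAut G)) (autTop G)

/-- The product topology on the topological semidirect product `G ⋊ P`, whose underlying
group is `SemidirectProduct G ↥P (actHom P)`, i.e. the multiplication is
`(g₁, p₁) * (g₂, p₂) = (g₁ * p₁ g₂, p₁ * p₂)`. -/
def sdpTop {G : Type*} [Group G] [TopologicalSpace G] (P : Subgroup ↥(topAut G)) :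
    TopologicalSpace (G ⋊[actHom P] ↥P) :=
  TopologicalSpace.induced (fun x : G ⋊[actHom P] ↥P => (x.left, x.right))
    (@instTopologicalSpaceProd G ↥P _ (subAutTop P))

/-- A (Hausdorff) topological group `(G, τ)` is *minimal* if every Hausdorff group topology
on `G` coarser than `τ` equals `τ`. -/
def IsMinimalTopGroup (G : Type*) [Group G] (τ : TopologicalSpace G) : Prop :=
  ∀ σ : TopologicalSpace G, τ ≤ σ → @IsTopologicalGroup G σ _ → @T2Space G σ → σ = τ

/-- The canonical homomorphism `Γ : G → Aut(G)` sending `g` to the inner automorphism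
`γ_g : x ↦ g * x * g⁻¹`; its range is the subgroup `Inn(G)` of inner automorphisms. -/
def innerAutHom (G : Type*) [Group G] [TopologicalSpace G] [IsTopologicalGroup G] :
    G →* ↥(topAut G) where
  toFun g := ⟨(Homeomorph.mulLeft g).trans (Homeomorph.mulRight g⁻¹), by
    intro a b
    show g * (a * b) * g⁻¹ = (g * a * g⁻¹) * (g * b * g⁻¹)
    group⟩
  map_one' := by
    apply Subtype.ext
    ext x
    show (1 : G) * x * (1 : G)⁻¹ = x
    group
  map_mul' g h := by
    apply Subtype.ext
    ext x
    show (g * h) * x * (g * h)⁻¹ = g * (h * x * h⁻¹) * g⁻¹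
    group

/-- A subgroup `P` of a topological group is *essential* in a subset `Q ⊇ P` (here `Q` is
always a subgroup of the ambient group `A`, given as a set, typically the closure of `P`)
if every nontrivial subgroup `N` of `A` contained in `Q` which is normal in `Q` and closed
in the subspace topology of `Q` meets `P` nontrivially. -/
def EssentialIn {A : Type*} [Group A] (t : TopologicalSpace A)
    (P : Subgroup A) (Q : Set A) : Prop :=
  ∀ N : Subgroup A, (N : Set A) ⊆ Q →
    (∀ q ∈ Q, ∀ n ∈ N, q * n * q⁻¹ ∈ N) →
    ((@closure A t (N : Set A)) ∩ Q ⊆ (N : Set A)) →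
    N ≠ ⊥ → ∃ x ∈ N, x ∈ P ∧ x ≠ 1

/-!
Let `σ` be a coarser Hausdorff group topology on `G ⋊ P`. As `G` is compact, `σ` agrees with the
product topology on `G`, which is `σ`-closed, so it suffices to show that the projection onto `P`
is `σ`-continuous. For `m = (g, p)` we have `p = γ_g⁻¹ · c(m)`, where `c(m)` is conjugation by `m`
and depends `σ`-continuously on `m`; so compactness of `G` shows that along every ultrafilter
converging to `1` the projection converges in `Aut(G)` to an inner automorphism. These limits form a
closed subgroup of `cl(P) ∩ Inn(G)` normalised by `cl(P)`, and it meets `P` trivially because `G`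
is `σ`-closed. By essentiality it is trivial, so the projection is continuous at `1`.
-/

open Filter Topology

namespace MonoidHom

variable {M H : Type*} [Group M] [TopologicalSpace M] [IsTopologicalGroup M]
  [Group H] [TopologicalSpace H] [ContinuousMul H] [T2Space H]

/-- The hypothesis `hf` makes the cluster points closed under inversion, as `f m * f m⁻¹ = 1`. -/
def clusterSubgroup (f : M →* H)
    (hf : ∀ U : Ultrafilter M, (U : Filter M) ≤ 𝓝 1 → ∃ x, Tendsto f (U : Filter M) (𝓝 x)) :
    Subgroup H where
  carrier := {x | MapClusterPt x (𝓝 1) f}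
  one_mem' := by
    have : Tendsto f (pure 1) (𝓝 1) := by simpa using tendsto_pure_nhds f 1
    exact this.mapClusterPt.mono (pure_le_nhds 1)
  mul_mem' {x y} hx hy := by
    have hxy : MapClusterPt (x * y) (𝓝 1 ×ˢ 𝓝 1) (f ∘ fun p : M × M => p.1 * p.2) := by
      simpa [Function.comp_def] using (hx.prodMap hy).tendsto_comp (tendsto_mul (a := x) (b := y))
    refine hxy.of_comp ?_
    simpa [nhds_prod_eq] using tendsto_mul (a := (1 : M)) (b := 1)
  inv_mem' {x} hx := by
    obtain ⟨U, hU, hUx⟩ := mapClusterPt_iff_ultrafilter.1 hx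
    have hU' : ↑(U.map (·⁻¹)) ≤ 𝓝 (1 : M) := by
      rw [Ultrafilter.coe_map]
      exact (continuous_inv.tendsto' 1 1 inv_one).mono_left hU
    obtain ⟨y, hUy⟩ := hf _ hU'
    have hxy : x * y = 1 := by
      refine tendsto_nhds_unique (hUx.mul (tendsto_map'_iff.1 hUy)) ?_
      simp
    rw [← inv_eq_of_mul_eq_one_right hxy] at hUy
    exact hUy.mapClusterPt.mono hU'

variable {f : M →* H}
  {hf : ∀ U : Ultrafilter M, (U : Filter M) ≤ 𝓝 1 → ∃ x, Tendsto f (U : Filter M) (𝓝 x)}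

theorem isClosed_clusterSubgroup : IsClosed (f.clusterSubgroup hf : Set H) :=
  isClosed_setOfPred_clusterPt

theorem clusterSubgroup_subset_closure_range :
    (f.clusterSubgroup hf : Set H) ⊆ closure (Set.range f) :=
  fun _ hx => ClusterPt.mem_closure_of_mem hx _ range_mem_map

theorem conj_mem_clusterSubgroup (m : M) {x : H} (hx : x ∈ f.clusterSubgroup hf) :
    f m * x * (f m)⁻¹ ∈ f.clusterSubgroup hf := by
  have hconj : MapClusterPt (f m * x * (f m)⁻¹) (𝓝 1) (f ∘ fun k => m * k * m⁻¹) := by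
    simpa [Function.comp_def] using
      hx.tendsto_comp (((continuous_const_mul (f m)).mul_const (f m)⁻¹).tendsto x)
  refine hconj.of_comp ?_
  simpa using (((continuous_const_mul m).mul_const m⁻¹).tendsto (1 : M))

theorem tendsto_nhds_one_of_clusterSubgroup_eq_bot (h : f.clusterSubgroup hf = ⊥) :
    Tendsto f (𝓝 1) (𝓝 1) := by
  rw [tendsto_iff_ultrafilter]
  intro U hU
  obtain ⟨x, hx⟩ := hf U hU
  have hx1 : x ∈ f.clusterSubgroup hf := hx.mapClusterPt.mono hU
  rw [h, Subgroup.mem_bot] at hx1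
  rwa [← hx1]

end MonoidHom

namespace SemidirectProduct

variable {N Q : Type*} [Group N] [Group Q] {φ : Q →* MulAut N}

theorem inl_left_of_right_eq_one {x : N ⋊[φ] Q} (hx : x.right = 1) : inl x.left = x := by
  ext <;> simp [hx]

theorem inl_left_eq_mul_inv_inr_right (x : N ⋊[φ] Q) : inl x.left = x * (inr x.right)⁻¹ :=
  eq_mul_inv_of_mul_eq (inl_left_mul_inr_right x)

variable [TopologicalSpace (N ⋊[φ] Q)] [IsTopologicalGroup (N ⋊[φ] Q)]

theorem continuous_left_of_continuous_rightHom [TopologicalSpace N] [TopologicalSpace Q]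
    (hinl : IsInducing (inl : N → N ⋊[φ] Q)) (hinr : Continuous (inr : Q → N ⋊[φ] Q))
    (hright : Continuous (rightHom : N ⋊[φ] Q → Q)) :
    Continuous fun x : N ⋊[φ] Q => x.left := by
  rw [hinl.continuous_iff]
  simp only [Function.comp_def, inl_left_eq_mul_inv_inr_right]
  exact continuous_id.mul (hinr.comp hright).inv

/-- `x * (inr x.right)⁻¹` lies in the closed set `range inl` and converges to `(inr q)⁻¹`. -/
theorem eq_one_of_tendsto_rightHom [TopologicalSpace Q]
    (hinl : IsClosed (Set.range (inl : N → N ⋊[φ] Q))) (hinr : Continuous (inr : Q → N ⋊[φ] Q))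
    {F : Filter (N ⋊[φ] Q)} [F.NeBot] (hF : F ≤ 𝓝 1) {q : Q}
    (hq : Tendsto (rightHom : N ⋊[φ] Q → Q) F (𝓝 q)) : q = 1 := by
  have hlim : Tendsto (fun x : N ⋊[φ] Q => x * (inr x.right)⁻¹) F (𝓝 (1 * (inr q)⁻¹)) :=
    (tendsto_id.mono_left hF).mul ((hinr.tendsto q).comp hq).inv
  obtain ⟨n, hn⟩ := hinl.mem_of_tendsto hlim
    (Eventually.of_forall fun x => ⟨x.left, inl_left_eq_mul_inv_inr_right x⟩)
  simpa using congrArg rightHom hn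

end SemidirectProduct

attribute [local instance] autTop

namespace topAut

variable {G : Type*} [Group G] [TopologicalSpace G]

theorem continuous_toContinuousMap :
    Continuous fun q : topAut G => ((q : G ≃ₜ G) : C(G, G)) :=
  @Continuous.comp _ _ _ _ (coTop G) _ _ _ continuous_induced_dom continuous_induced_dom

theorem continuous_of_continuous_uncurry {X : Type*} [TopologicalSpace X] (f : X → topAut G)
    (h : Continuous fun p : X × G => (f p.1 : G ≃ₜ G) p.2) : Continuous f :=
  continuous_induced_rng.2 <| continuous_induced_rng.2 <|
    ContinuousMap.continuous_of_continuous_uncurry _ h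

theorem continuous_eval [LocallyCompactSpace G] :
    Continuous fun p : topAut G × G => (p.1 : G ≃ₜ G) p.2 :=
  ContinuousEval.continuous_eval.comp (continuous_toContinuousMap.prodMap continuous_id)

instance [LocallyCompactSpace G] : ContinuousMul (topAut G) :=
  ⟨continuous_of_continuous_uncurry _ <| continuous_eval.comp <|
    continuous_fst.fst.prodMk <| continuous_eval.comp <| continuous_fst.snd.prodMk continuous_snd⟩

instance [T2Space G] : T2Space (topAut G) :=
  .of_injective_continuous (f := fun q : topAut G => ((q : G ≃ₜ G) : C(G, G)))
    (fun _ _ h => Subtype.ext <| Homeomorph.ext <| ContinuousMap.ext_iff.1 h)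
    continuous_toContinuousMap

theorem map_inv' (q : topAut G) (x : G) : (q : G ≃ₜ G) x⁻¹ = ((q : G ≃ₜ G) x)⁻¹ :=
  map_inv (MulEquiv.mk' (q : G ≃ₜ G).toEquiv q.2) x

end topAut

section innerAutHom

variable {G : Type*} [Group G] [TopologicalSpace G] [IsTopologicalGroup G]

theorem innerAutHom_apply (g x : G) : (innerAutHom G g : G ≃ₜ G) x = g * x * g⁻¹ :=
  rfl

theorem continuous_innerAutHom : Continuous (innerAutHom G) :=
  topAut.continuous_of_continuous_uncurry _ <| by
    simp only [innerAutHom_apply]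
    fun_prop

theorem mul_innerAutHom_mul_inv (q : topAut G) (g : G) :
    q * innerAutHom G g * q⁻¹ = innerAutHom G ((q : G ≃ₜ G) g) := by
  refine Subtype.ext <| Homeomorph.ext fun x => ?_
  change (q : G ≃ₜ G) (g * (q : G ≃ₜ G).symm x * g⁻¹) = _
  rw [q.2, q.2, topAut.map_inv', Homeomorph.apply_symm_apply, innerAutHom_apply]

end innerAutHom

section SemidirectProduct

open SemidirectProduct

variable {G : Type*} [Group G] [TopologicalSpace G] [IsTopologicalGroup G]
  {P : Subgroup (topAut G)}

def conjAut (m : G ⋊[actHom P] P) : topAut G :=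
  innerAutHom G m.left * m.right

theorem inl_conjAut_apply (m : G ⋊[actHom P] P) (x : G) :
    inl ((conjAut m : G ≃ₜ G) x) = m * inl x * m⁻¹ := by
  rw [← inl_left_of_right_eq_one (x := m * inl x * m⁻¹) (by simp)]
  congr 1
  simp [conjAut, innerAutHom_apply]
  rfl

theorem conjAut_one : conjAut (1 : G ⋊[actHom P] P) = 1 := by
  simp [conjAut]

def rightAut (P : Subgroup (topAut G)) : G ⋊[actHom P] P →* topAut G :=
  P.subtype.comp rightHom

theorem rightAut_eq_inv_mul_conjAut (m : G ⋊[actHom P] P) :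
    rightAut P m = (innerAutHom G m.left)⁻¹ * conjAut m :=
  (inv_mul_cancel_left _ _).symm

variable [TopologicalSpace (G ⋊[actHom P] P)] [IsTopologicalGroup (G ⋊[actHom P] P)]

theorem continuous_conjAut (hinl : IsInducing (inl : G → G ⋊[actHom P] P)) :
    Continuous (conjAut (P := P)) :=
  topAut.continuous_of_continuous_uncurry _ <| by
    rw [hinl.continuous_iff]
    simp only [Function.comp_def, inl_conjAut_apply]
    exact (continuous_fst.mul (hinl.continuous.comp continuous_snd)).mul continuous_fst.inv

theorem tendsto_rightAut [LocallyCompactSpace G] (hinl : IsInducing (inl : G → G ⋊[actHom P] P))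
    {F : Filter (G ⋊[actHom P] P)} (hF : F ≤ 𝓝 1) {g : G}
    (hg : Tendsto (fun m => m.left) F (𝓝 g)) :
    Tendsto (rightAut P) F (𝓝 (innerAutHom G g)⁻¹) := by
  have hinner : Tendsto (fun m => innerAutHom G m.left⁻¹) F (𝓝 (innerAutHom G g⁻¹)) :=
    (continuous_innerAutHom.tendsto _).comp hg.inv
  have hconj : Tendsto conjAut F (𝓝 1) :=
    ((continuous_conjAut hinl).tendsto' 1 1 conjAut_one).mono_left hF
  have hlim := hinner.mul hconj
  simp only [map_inv, mul_one] at hlim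
  exact hlim.congr fun m => (rightAut_eq_inv_mul_conjAut m).symm

end SemidirectProduct

section CoarserTopology

open SemidirectProduct

variable {G : Type*} [Group G] [TopologicalSpace G] [IsTopologicalGroup G] [CompactSpace G]
  [T2Space G] {P : Subgroup (topAut G)}
  [TopologicalSpace (G ⋊[actHom P] P)] [IsTopologicalGroup (G ⋊[actHom P] P)]

theorem exists_tendsto_rightAut (hinl : IsInducing (inl : G → G ⋊[actHom P] P))
    (U : Ultrafilter (G ⋊[actHom P] P)) (hU : (U : Filter (G ⋊[actHom P] P)) ≤ 𝓝 1) :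
    ∃ g : G, Tendsto (rightAut P) (U : Filter (G ⋊[actHom P] P)) (𝓝 (innerAutHom G g)⁻¹) := by
  obtain ⟨g, -, hg⟩ := isCompact_univ.ultrafilter_le_nhds (U.map fun m => m.left) (by simp)
  exact ⟨g, tendsto_rightAut hinl hU hg⟩

/-- `rightAut P` is continuous at `1` exactly when this subgroup is trivial. -/
def rightAutDefect (hinl : IsInducing (inl : G → G ⋊[actHom P] P)) : Subgroup (topAut G) :=
  (rightAut P).clusterSubgroup fun U hU =>
    let ⟨_, hg⟩ := exists_tendsto_rightAut hinl U hU; ⟨_, hg⟩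

variable {hinl : IsInducing (inl : G → G ⋊[actHom P] P)}

theorem exists_eq_innerAutHom_of_mem_rightAutDefect {x : topAut G}
    (hx : x ∈ rightAutDefect hinl) : ∃ g : G, x = innerAutHom G g := by
  obtain ⟨U, hU, hUx⟩ := mapClusterPt_iff_ultrafilter.1 hx
  obtain ⟨g, hUg⟩ := exists_tendsto_rightAut hinl U hU
  exact ⟨g⁻¹, by rw [map_inv]; exact tendsto_nhds_unique hUx hUg⟩

theorem isClosed_rightAutDefect : IsClosed (rightAutDefect hinl : Set (topAut G)) :=
  MonoidHom.isClosed_clusterSubgroup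

theorem rightAutDefect_subset_closure :
    (rightAutDefect hinl : Set (topAut G)) ⊆ closure P :=
  MonoidHom.clusterSubgroup_subset_closure_range.trans <|
    closure_mono <| Set.range_subset_iff.2 fun m => (rightHom m).2

theorem conj_mem_rightAutDefect {q : topAut G} (hq : q ∈ closure (P : Set (topAut G)))
    {x : topAut G} (hx : x ∈ rightAutDefect hinl) : q * x * q⁻¹ ∈ rightAutDefect hinl := by
  obtain ⟨g, rfl⟩ := exists_eq_innerAutHom_of_mem_rightAutDefect hx
  have hclosed : IsClosed {q : topAut G | innerAutHom G ((q : G ≃ₜ G) g) ∈ rightAutDefect hinl} :=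
    isClosed_rightAutDefect.preimage <| continuous_innerAutHom.comp <|
      topAut.continuous_eval.comp <| continuous_id.prodMk continuous_const
  have hP : (P : Set (topAut G)) ⊆ {q | innerAutHom G ((q : G ≃ₜ G) g) ∈ rightAutDefect hinl} :=
    fun p hp => by
      have := MonoidHom.conj_mem_clusterSubgroup (inr ⟨p, hp⟩) hx
      rwa [show rightAut P (inr ⟨p, hp⟩) = p from rfl, mul_innerAutHom_mul_inv] at this
  rw [mul_innerAutHom_mul_inv]
  exact closure_minimal hP hclosed hq

theorem eq_one_of_mem_rightAutDefect (hinr : Continuous (inr : P → G ⋊[actHom P] P))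
    (hcl : IsClosed (Set.range (inl : G → G ⋊[actHom P] P))) {x : topAut G}
    (hx : x ∈ rightAutDefect hinl) (hxP : x ∈ P) : x = 1 := by
  obtain ⟨U, hU, hUx⟩ := mapClusterPt_iff_ultrafilter.1 hx
  have hright : Tendsto rightHom (U : Filter (G ⋊[actHom P] P)) (𝓝 (⟨x, hxP⟩ : P)) :=
    tendsto_subtype_rng.2 (by exact hUx)
  simpa using congrArg Subtype.val (eq_one_of_tendsto_rightHom hcl hinr hU hright)

theorem rightAutDefect_eq_bot (hinl : IsClosedEmbedding (inl : G → G ⋊[actHom P] P))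
    (hinr : Continuous (inr : P → G ⋊[actHom P] P))
    (hess : EssentialIn (autTop G) (P ⊓ (innerAutHom G).range)
      (closure (P : Set (topAut G)) ∩ (innerAutHom G).range)) :
    rightAutDefect hinl.isInducing = ⊥ := by
  by_contra hne
  have hsub : (rightAutDefect hinl.isInducing : Set (topAut G)) ⊆
      closure (P : Set (topAut G)) ∩ (innerAutHom G).range := fun x hx =>
    ⟨rightAutDefect_subset_closure hx,
      let ⟨g, hg⟩ := exists_eq_innerAutHom_of_mem_rightAutDefect hx; ⟨g, hg.symm⟩⟩
  have hclosed : closure (rightAutDefect hinl.isInducing : Set (topAut G)) ∩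
      (closure (P : Set (topAut G)) ∩ (innerAutHom G).range) ⊆
        rightAutDefect hinl.isInducing := by
    rw [isClosed_rightAutDefect.closure_eq]
    exact Set.inter_subset_left
  obtain ⟨x, hx, hxP, hx1⟩ := hess _ hsub (fun q hq _ hn => conj_mem_rightAutDefect hq.1 hn)
    hclosed hne
  exact hx1 <| eq_one_of_mem_rightAutDefect hinr hinl.isClosed_range hx (Subgroup.mem_inf.1 hxP).1

theorem continuous_rightHom_of_essentialIn
    (hinl : IsClosedEmbedding (inl : G → G ⋊[actHom P] P))
    (hinr : Continuous (inr : P → G ⋊[actHom P] P))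
    (hess : EssentialIn (autTop G) (P ⊓ (innerAutHom G).range)
      (closure (P : Set (topAut G)) ∩ (innerAutHom G).range)) :
    Continuous (rightHom : G ⋊[actHom P] P → P) :=
  haveI := P.toSubmonoid.continuousMul
  continuous_of_continuousAt_one _ <| tendsto_subtype_rng.2 <|
    MonoidHom.tendsto_nhds_one_of_clusterSubgroup_eq_bot (rightAutDefect_eq_bot hinl hinr hess)

end CoarserTopology

/-- Let `G` be a compact Hausdorff topological group and `P ≤ Aut(G)`.
If `P ∩ Inn(G)` is essential in `cl(P) ∩ Inn(G)`, then the topological semidirect product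
`G ⋊ P` is a minimal topological group. -/
theorem semidirectProduct_minimal_of_essential_inn (G : Type*)
    [Group G] [TopologicalSpace G] [IsTopologicalGroup G] [CompactSpace G] [T2Space G]
    (P : Subgroup ↥(topAut G))
    (hess : EssentialIn (autTop G) (P ⊓ (innerAutHom G).range)
      ((@closure _ (autTop G) (P : Set ↥(topAut G))) ∩ ((innerAutHom G).range : Set ↥(topAut G)))) :
    IsMinimalTopGroup (G ⋊[actHom P] ↥P) (sdpTop P) := by
  intro σ hle _ _
  have hinl : Continuous[_, σ] (SemidirectProduct.inl : G → G ⋊[actHom P] P) :=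
    continuous_le_rng hle <| continuous_induced_rng.2 <| continuous_id.prodMk continuous_const
  have hinr : Continuous[_, σ] (SemidirectProduct.inr : P → G ⋊[actHom P] P) :=
    continuous_le_rng hle <| continuous_induced_rng.2 <| continuous_const.prodMk continuous_id
  have hemb := hinl.isClosedEmbedding SemidirectProduct.inl_injective
  have hright := continuous_rightHom_of_essentialIn hemb hinr hess
  have hleft :=
    SemidirectProduct.continuous_left_of_continuous_rightHom hemb.isInducing hinr hright
  exact le_antisymm (continuous_iff_le_induced.1 (hleft.prodMk hright)) hle
end
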